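/- arXiv:1811.11589 — 2 statements merged into one kernel-verified Lean document; each statement's English description precedes it below -/
import Mathlib

section
/- The map g: PA_{F₄} → Z₃ given by g(y₁,y₂,y₃,y₄) = (y₁y₂y₃y₄(y₄²−y₁²), y₁y₂y₃y₄(y₄²−y₂²), y₁y₂y₃y₄(y₄²−y₃²)) is well-defined, where PA_{F₄} = {y ∈ ℂ⁴ : y_i ≠ 0 for all i, y_i ≠ ±y_j for i ≠ j, y₁ ± y₂ ± y₃ ± y₄ ≠ 0 for all sign choices} and Z₃ = {z ∈ ℂ³ : z_i ≠ 0, z_i ≠ z_j for i ≠ j}. -/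
/-- the map `g : PA_{F₄} → Z₃`,
`g(y) = (y₁y₂y₃y₄(y₄²-y₁²), y₁y₂y₃y₄(y₄²-y₂²), y₁y₂y₃y₄(y₄²-y₃²))`, is well-defined:
its coordinates are nonzero and pairwise distinct. -/
theorem stmt_10 (y : Fin 4 → ℂ)
    (h0 : ∀ i, y i ≠ 0)
    (hpm : ∀ i j, i ≠ j → y i ≠ y j ∧ y i ≠ -y j)
    (hsign : ∀ e₂ e₃ e₄ : ℂ, (e₂ = 1 ∨ e₂ = -1) → (e₃ = 1 ∨ e₃ = -1) → (e₄ = 1 ∨ e₄ = -1) →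
      y 0 + e₂ * y 1 + e₃ * y 2 + e₄ * y 3 ≠ 0) :
    (∀ i : Fin 3, y 0 * y 1 * y 2 * y 3 * (y 3 ^ 2 - y i.castSucc ^ 2) ≠ 0) ∧
    (∀ i j : Fin 3, i ≠ j →
      y 0 * y 1 * y 2 * y 3 * (y 3 ^ 2 - y i.castSucc ^ 2) ≠
      y 0 * y 1 * y 2 * y 3 * (y 3 ^ 2 - y j.castSucc ^ 2)) := by
  have hprod : y 0 * y 1 * y 2 * y 3 ≠ 0 := by
    simp [h0 0, h0 1, h0 2, h0 3]
  have hsq : ∀ i j : Fin 4, i ≠ j → y i ^ 2 - y j ^ 2 ≠ 0 := by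
    intro i j hij h
    have h' : (y i - y j) * (y i + y j) = 0 := by ring_nf; linear_combination h
    rcases mul_eq_zero.1 h' with h'' | h''
    · exact (hpm i j hij).1 (sub_eq_zero.1 h'')
    · exact (hpm i j hij).2 (by linear_combination h'')
  constructor
  · intro i
    have hi : (3 : Fin 4) ≠ i.castSucc := by
      fin_cases i <;> decide
    exact mul_ne_zero hprod (hsq 3 i.castSucc hi)
  · intro i j hij h
    have h2 : y 3 ^ 2 - y i.castSucc ^ 2 = y 3 ^ 2 - y j.castSucc ^ 2 :=
      mul_left_cancel₀ hprod h
    have : y i.castSucc ^ 2 - y j.castSucc ^ 2 = 0 := by linear_combination -h2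
    exact hsq i.castSucc j.castSucc (by fin_cases i <;> fin_cases j <;> simp_all <;> decide) this
end

section
/- In the group with generators X̄, Ā₁, …, Ā_n and relations X̄^q = 1, X̄Ā₁X̄Ā₁ = Ā₁X̄Ā₁X̄, Ā_iĀ_{i+1}Ā_i = Ā_{i+1}Ā_iĀ_{i+1} for 1 ≤ i ≤ n−1, and Ā_iĀ_j = Ā_jĀ_i for |i−j| > 1, the assignment X ↦ X̄, A_i ↦ Ā_i (i = 1,…,n−1), P ↦ Ā_n² defines a group homomorphism from the group ⟨X, A₁, …, A_{n−1}, P | X^q = 1, XA₁XA₁ = A₁XA₁X, A_iA_{i+1}A_i = A_{i+1}A_iA_{i+1}, A_iA_j = A_jA_i for |i−j|>1, PA_{n−1}PA_{n−1} = A_{n−1}PA_{n−1}P⟩ (relations among X, A_i, P also include that X and P commute with A_i for i not adjacent as in the orbifold braid group presentation). -/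
/-- Generators of the orbifold braid group `π₁^{orb}(B_n(ℂ(1,1;q)))`:
`X`, `A₁, …, A_m` (`m = n-1`), and `P`. -/
abbrev SrcGen (m : ℕ) : Type := Unit ⊕ (Fin m ⊕ Unit)

def sX {m : ℕ} : FreeGroup (SrcGen m) := FreeGroup.of (Sum.inl ())
def sA {m : ℕ} (i : Fin m) : FreeGroup (SrcGen m) := FreeGroup.of (Sum.inr (Sum.inl i))
def sP {m : ℕ} : FreeGroup (SrcGen m) := FreeGroup.of (Sum.inr (Sum.inr ()))

/-- Relators of `π₁^{orb}(B_n(ℂ(1,1;q)))`: `X^q = 1`, `XA₁XA₁ = A₁XA₁X`, braid relations,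
commutation of non-adjacent generators (including `X` and `P` with non-adjacent `A_i`),
and `PA_{n-1}PA_{n-1} = A_{n-1}PA_{n-1}P`. -/
def srcRels (m q : ℕ) : Set (FreeGroup (SrcGen m)) :=
  {w | w = sX ^ q} ∪
  {w | ∃ h : 0 < m, w = sX * sA ⟨0, h⟩ * sX * sA ⟨0, h⟩ *
      (sA ⟨0, h⟩ * sX * sA ⟨0, h⟩ * sX)⁻¹} ∪
  {w | ∃ i j : Fin m, (j : ℕ) = (i : ℕ) + 1 ∧
      w = sA i * sA j * sA i * (sA j * sA i * sA j)⁻¹} ∪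
  {w | ∃ i j : Fin m, (i : ℕ) + 1 < (j : ℕ) ∧ w = sA i * sA j * (sA j * sA i)⁻¹} ∪
  {w | ∃ i : Fin m, 0 < (i : ℕ) ∧ w = sX * sA i * (sA i * sX)⁻¹} ∪
  {w | ∃ i : Fin m, (i : ℕ) + 1 < m ∧ w = sP * sA i * (sA i * sP)⁻¹} ∪
  {w | ∃ h : 0 < m, w = sP * sA ⟨m - 1, Nat.sub_lt h Nat.one_pos⟩ *
      sP * sA ⟨m - 1, Nat.sub_lt h Nat.one_pos⟩ *
      (sA ⟨m - 1, Nat.sub_lt h Nat.one_pos⟩ * sP *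
        sA ⟨m - 1, Nat.sub_lt h Nat.one_pos⟩ * sP)⁻¹}

/-- Generators of the orbifold braid group `π₁^{orb}(B_{n+1}(ℂ(0,1;q)))`:
`X̄`, `Ā₁, …, Ā_{m+1}`. -/
abbrev TgtGen (m : ℕ) : Type := Unit ⊕ Fin (m + 1)

def tX {m : ℕ} : FreeGroup (TgtGen m) := FreeGroup.of (Sum.inl ())
def tA {m : ℕ} (i : Fin (m + 1)) : FreeGroup (TgtGen m) := FreeGroup.of (Sum.inr i)

/-- Relators of `π₁^{orb}(B_{n+1}(ℂ(0,1;q)))`: `X̄^q = 1`, `X̄Ā₁X̄Ā₁ = Ā₁X̄Ā₁X̄`,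
braid relations, and commutation of non-adjacent generators. -/
def tgtRels (m q : ℕ) : Set (FreeGroup (TgtGen m)) :=
  {w | w = tX ^ q} ∪
  {w | w = tX * tA 0 * tX * tA 0 * (tA 0 * tX * tA 0 * tX)⁻¹} ∪
  {w | ∃ i j : Fin (m + 1), (j : ℕ) = (i : ℕ) + 1 ∧
      w = tA i * tA j * tA i * (tA j * tA i * tA j)⁻¹} ∪
  {w | ∃ i j : Fin (m + 1), (i : ℕ) + 1 < (j : ℕ) ∧ w = tA i * tA j * (tA j * tA i)⁻¹} ∪
  {w | ∃ i : Fin (m + 1), 0 < (i : ℕ) ∧ w = tX * tA i * (tA i * tX)⁻¹}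


/-- Any relator becomes trivial in the presented group. -/
lemma mk_rel_one {α : Type*} {rels : Set (FreeGroup α)} {r : FreeGroup α} (h : r ∈ rels) :
    PresentedGroup.mk rels r = 1 :=
  (QuotientGroup.eq_one_iff r).mpr (Subgroup.subset_normalClosure h)

/-- The key computation: if `b c b = c b c` then `c² b c² b = b c² b c²`. -/
lemma braid_sq {G : Type*} [Group G] (b c : G) (h : b * c * b = c * b * c) :
    c ^ 2 * b * c ^ 2 * b = b * c ^ 2 * b * c ^ 2 := by
  calc c ^ 2 * b * c ^ 2 * b
      = c * (c * b * c) * (c * b) := by simp only [pow_two, mul_assoc]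
    _ = c * (b * c * b) * (c * b) := by rw [h]
    _ = (c * b * c) * (b * c * b) := by group
    _ = (b * c * b) * (c * b * c) := by rw [h]
    _ = (b * c) * (b * c * b) * c := by group
    _ = (b * c) * (c * b * c) * c := by rw [h]
    _ = b * c ^ 2 * b * c ^ 2 := by simp only [pow_two, mul_assoc]

section TargetRels

variable {m q : ℕ}

local notation "x" => (PresentedGroup.of (rels := tgtRels m q) (Sum.inl ()))
local notation "a" i => (PresentedGroup.of (rels := tgtRels m q) (Sum.inr i))

lemma t_pow : x ^ q = 1 := by
  have h1 : PresentedGroup.mk (tgtRels m q) (tX ^ q) = 1 :=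
    mk_rel_one (Or.inl (Or.inl (Or.inl (Or.inl rfl))))
  rw [map_pow] at h1
  exact h1

lemma t_mix : x * (a (0 : Fin (m+1))) * x * (a (0 : Fin (m+1))) =
    (a (0 : Fin (m+1))) * x * (a (0 : Fin (m+1))) * x := by
  have h1 : PresentedGroup.mk (tgtRels m q)
      (tX * tA 0 * tX * tA 0 * (tA 0 * tX * tA 0 * tX)⁻¹) = 1 :=
    mk_rel_one (Or.inl (Or.inl (Or.inl (Or.inr rfl))))
  rw [map_mul, map_mul, map_mul, map_mul, map_inv, map_mul, map_mul,
    mul_inv_eq_one] at h1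
  exact h1

lemma t_braid (i j : Fin (m + 1)) (hj : (j : ℕ) = (i : ℕ) + 1) :
    (a i) * (a j) * (a i) = (a j) * (a i) * (a j) := by
  have h1 : PresentedGroup.mk (tgtRels m q)
      (tA i * tA j * tA i * (tA j * tA i * tA j)⁻¹) = 1 :=
    mk_rel_one (Or.inl (Or.inl (Or.inr ⟨i, j, hj, rfl⟩)))
  rw [map_mul, map_mul, map_mul, map_inv, map_mul, map_mul, mul_inv_eq_one] at h1
  exact h1

lemma t_comm (i j : Fin (m + 1)) (hij : (i : ℕ) + 1 < (j : ℕ)) :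
    (a i) * (a j) = (a j) * (a i) := by
  have h1 : PresentedGroup.mk (tgtRels m q) (tA i * tA j * (tA j * tA i)⁻¹) = 1 :=
    mk_rel_one (Or.inl (Or.inr ⟨i, j, hij, rfl⟩))
  rw [map_mul, map_inv, map_mul, mul_inv_eq_one] at h1
  exact h1

lemma t_xcomm (i : Fin (m + 1)) (hi : 0 < (i : ℕ)) :
    x * (a i) = (a i) * x := by
  have h1 : PresentedGroup.mk (tgtRels m q) (tX * tA i * (tA i * tX)⁻¹) = 1 :=
    mk_rel_one (Or.inr ⟨i, hi, rfl⟩)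
  rw [map_mul, map_inv, map_mul, mul_inv_eq_one] at h1
  exact h1

end TargetRels

/-- The map on generators. -/
def fmap (m q : ℕ) : SrcGen m → PresentedGroup (tgtRels m q)
  | Sum.inl _ => PresentedGroup.of (Sum.inl ())
  | Sum.inr (Sum.inl i) => PresentedGroup.of (Sum.inr i.castSucc)
  | Sum.inr (Sum.inr _) => (PresentedGroup.of (Sum.inr (Fin.last m))) ^ 2

lemma fmap_rels (m q : ℕ) (hm : 0 < m) :
    ∀ r ∈ srcRels m q, FreeGroup.lift (fmap m q) r = 1 := by
  intro r hr
  set F := FreeGroup.lift (fmap m q) with hF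
  have hx : F sX = PresentedGroup.of (Sum.inl ()) := FreeGroup.lift_apply_of
  have ha : ∀ i : Fin m, F (sA i) = PresentedGroup.of (Sum.inr i.castSucc) :=
    fun i => FreeGroup.lift_apply_of
  have hp : F sP = (PresentedGroup.of (Sum.inr (Fin.last m))) ^ 2 := FreeGroup.lift_apply_of
  rcases hr with ((((((h | h) | h) | h) | h) | h) | h)
  · -- X^q
    rw [h, map_pow, hx, t_pow]
  · -- mixed relation
    obtain ⟨h0, h⟩ := h
    rw [h]
    simp only [map_mul, map_inv, hx, ha, mul_inv_eq_one]
    exact t_mix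
  · -- braid
    obtain ⟨i, j, hij, h⟩ := h
    rw [h]
    simp only [map_mul, map_inv, ha, mul_inv_eq_one]
    exact t_braid _ _ (by simpa using hij)
  · -- commutation A
    obtain ⟨i, j, hij, h⟩ := h
    rw [h]
    simp only [map_mul, map_inv, ha, mul_inv_eq_one]
    exact t_comm _ _ (by simpa using hij)
  · -- X commutes
    obtain ⟨i, hi, h⟩ := h
    rw [h]
    simp only [map_mul, map_inv, hx, ha, mul_inv_eq_one]
    exact t_xcomm _ (by simpa using hi)
  · -- P commutes
    obtain ⟨i, hi, h⟩ := h
    rw [h]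
    simp only [map_mul, map_inv, ha, hp, mul_inv_eq_one]
    have hc : (PresentedGroup.of (rels := tgtRels m q) (Sum.inr i.castSucc)) *
        PresentedGroup.of (Sum.inr (Fin.last m)) =
        PresentedGroup.of (Sum.inr (Fin.last m)) * PresentedGroup.of (Sum.inr i.castSucc) :=
      t_comm _ _ (by simpa using hi)
    have hc' : Commute (PresentedGroup.of (rels := tgtRels m q) (Sum.inr i.castSucc))
        (PresentedGroup.of (Sum.inr (Fin.last m))) := hc
    exact ((hc'.pow_right 2).symm).eq
  · -- P braid-square relation
    obtain ⟨h0, h⟩ := h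
    rw [h]
    simp only [map_mul, map_inv, ha, hp, mul_inv_eq_one]
    have hb : ((⟨m - 1, Nat.sub_lt h0 Nat.one_pos⟩ : Fin m).castSucc : ℕ) + 1 =
        ((Fin.last m : Fin (m+1)) : ℕ) := by
      simp [Fin.castSucc, Fin.last]
      omega
    exact braid_sq _ _ (t_braid _ _ hb.symm)

/-- the assignment `X ↦ X̄`, `A_i ↦ Ā_i`, `P ↦ Ā_{m+1}²` defines a group
homomorphism `π₁^{orb}(B_n(ℂ(1,1;q))) → π₁^{orb}(B_{n+1}(ℂ(0,1;q)))` of the presented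
groups. -/
theorem stmt_17 (m q : ℕ) (hm : 0 < m) :
    ∃ φ : PresentedGroup (srcRels m q) →* PresentedGroup (tgtRels m q),
      φ (PresentedGroup.of (Sum.inl ())) = PresentedGroup.of (Sum.inl ()) ∧
      (∀ i : Fin m, φ (PresentedGroup.of (Sum.inr (Sum.inl i))) =
        PresentedGroup.of (Sum.inr i.castSucc)) ∧
      φ (PresentedGroup.of (Sum.inr (Sum.inr ()))) =
        (PresentedGroup.of (Sum.inr (Fin.last m))) ^ 2 := by
  refine ⟨PresentedGroup.toGroup (fmap_rels m q hm), ?_, ?_, ?_⟩ <;>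
    simp [PresentedGroup.toGroup.of, fmap]
end
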